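/- Let u ∈ C(closure of Q_1) be a solution of the linear uniformly parabolic equation u_t − a_{ij}(x,t)u_{ij} = 0 in Q_1, where the coefficients satisfy λI ≤ (a_{ij}(x,t)) ≤ ΛI for all (x,t) ∈ Q_1 with constants 0 < λ ≤ Λ < ∞, and let A be a positive constant. If osc_{B_1} u(·,t) ≤ A for every t ∈ [−1,0], then osc_{Q_1} u ≤ C A, where C > 0 depends only on n and Λ. -/

import Mathlib

open Set Metric MeasureTheory Filter
open scoped ENNReal

noncomputable section

/-- `ℝ^n` as a Euclidean (inner product) space. -/
abbrev En (n : ℕ) := EuclideanSpace ℝ (Fin n)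

variable {n : ℕ}

/-- Parabolic cylinder `Q_r = B_r × (−r², 0]`. -/
def Qc (n : ℕ) (r : ℝ) : Set (En n × ℝ) := (ball (0 : En n) r) ×ˢ (Ioc (-(r ^ 2)) (0 : ℝ))

/-- The spatial gradient `Du` at a space-time point. -/
def sGrad (u : En n × ℝ → ℝ) (z : En n × ℝ) : En n := gradient (fun y => u (y, z.2)) z.1

/-- The time derivative `u_t` at a space-time point. -/
def tDeriv (u : En n × ℝ → ℝ) (z : En n × ℝ) : ℝ := deriv (fun s => u (z.1, s)) z.2

/-- The spatial Hessian `D²u` at a space-time point, as a continuous linear map. -/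
def sHess (u : En n × ℝ → ℝ) (z : En n × ℝ) : En n →L[ℝ] En n :=
  fderiv ℝ (fun y => gradient (fun w => u (w, z.2)) y) z.1

/-- The second spatial partial derivative `u_{ij}`. -/
def pd2 (u : En n × ℝ → ℝ) (z : En n × ℝ) (i j : Fin n) : ℝ :=
  inner ℝ (sHess u z (EuclideanSpace.single i 1)) (EuclideanSpace.single j 1)

/-- The spatial Laplacian `Δu`. -/
def sLap (u : En n × ℝ → ℝ) (z : En n × ℝ) : ℝ := ∑ i, pd2 u z i i

/-- Viscosity supersolution of `u_t = Δ^N_{p(x,t)} u` on `Q`. -/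
def ViscSuper (p u : En n × ℝ → ℝ) (Q : Set (En n × ℝ)) : Prop :=
  LowerSemicontinuousOn u Q ∧
  ∀ φ : En n × ℝ → ℝ, ContDiff ℝ 2 φ → ∀ z₀ ∈ Q,
    IsLocalMinOn (fun z => u z - φ z) Q z₀ →
    (sGrad φ z₀ ≠ 0 →
      tDeriv φ z₀ ≥ sLap φ z₀ + (p z₀ - 2) *
        (inner ℝ (sHess φ z₀ ((‖sGrad φ z₀‖)⁻¹ • sGrad φ z₀))
          ((‖sGrad φ z₀‖)⁻¹ • sGrad φ z₀) : ℝ)) ∧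
    (sGrad φ z₀ = 0 → ∃ q : En n, ‖q‖ ≤ 1 ∧
      tDeriv φ z₀ ≥ sLap φ z₀ + (p z₀ - 2) * (inner ℝ (sHess φ z₀ q) q : ℝ))

/-- Viscosity subsolution of `u_t = Δ^N_{p(x,t)} u` on `Q`. -/
def ViscSub (p u : En n × ℝ → ℝ) (Q : Set (En n × ℝ)) : Prop :=
  UpperSemicontinuousOn u Q ∧
  ∀ φ : En n × ℝ → ℝ, ContDiff ℝ 2 φ → ∀ z₀ ∈ Q,
    IsLocalMaxOn (fun z => u z - φ z) Q z₀ →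
    (sGrad φ z₀ ≠ 0 →
      tDeriv φ z₀ ≤ sLap φ z₀ + (p z₀ - 2) *
        (inner ℝ (sHess φ z₀ ((‖sGrad φ z₀‖)⁻¹ • sGrad φ z₀))
          ((‖sGrad φ z₀‖)⁻¹ • sGrad φ z₀) : ℝ)) ∧
    (sGrad φ z₀ = 0 → ∃ q : En n, ‖q‖ ≤ 1 ∧
      tDeriv φ z₀ ≤ sLap φ z₀ + (p z₀ - 2) * (inner ℝ (sHess φ z₀ q) q : ℝ))

/-- Viscosity solution of `u_t = Δ^N_{p(x,t)} u` on `Q`. -/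
def ViscSol (p u : En n × ℝ → ℝ) (Q : Set (En n × ℝ)) : Prop :=
  ViscSuper p u Q ∧ ViscSub p u Q

/-- `u` solves the regularized equation
`u_t = Δu + (p(x,t)−2)⟨D²u Du, Du⟩/(|Du|² + ε²)` pointwise on `Q`,
with the required derivatives existing. -/
def SolvesReg (p : En n × ℝ → ℝ) (ε : ℝ) (u : En n × ℝ → ℝ) (Q : Set (En n × ℝ)) : Prop :=
  ∀ z ∈ Q,
    DifferentiableAt ℝ (fun s => u (z.1, s)) z.2 ∧
    DifferentiableAt ℝ (fun y => u (y, z.2)) z.1 ∧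
    DifferentiableAt ℝ (fun y => gradient (fun w => u (w, z.2)) y) z.1 ∧
    tDeriv u z = sLap u z + (p z - 2) *
      (inner ℝ (sHess u z (sGrad u z)) (sGrad u z) : ℝ) / (‖sGrad u z‖ ^ 2 + ε ^ 2)

/-- `u` is a classical solution of the linear equation `u_t = a_{ij}(x,t) u_{ij}` on `Q`. -/
def SolvesLinear (a : En n × ℝ → Matrix (Fin n) (Fin n) ℝ) (u : En n × ℝ → ℝ)
    (Q : Set (En n × ℝ)) : Prop :=
  ∀ z ∈ Q,
    DifferentiableAt ℝ (fun s => u (z.1, s)) z.2 ∧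
    DifferentiableAt ℝ (fun y => u (y, z.2)) z.1 ∧
    DifferentiableAt ℝ (fun y => gradient (fun w => u (w, z.2)) y) z.1 ∧
    tDeriv u z = ∑ i, ∑ j, a z i j * pd2 u z i j

/-- Uniform parabolicity `λ I ≤ (a_{ij}) ≤ Λ I` on `Q`. -/
def UnifParab (a : En n × ℝ → Matrix (Fin n) (Fin n) ℝ) (lam Lam : ℝ)
    (Q : Set (En n × ℝ)) : Prop :=
  ∀ z ∈ Q, ∀ ξ : Fin n → ℝ,
    lam * (∑ i, ξ i ^ 2) ≤ ∑ i, ∑ j, a z i j * ξ i * ξ j ∧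
    ∑ i, ∑ j, a z i j * ξ i * ξ j ≤ Lam * (∑ i, ξ i ^ 2)

/-- Parabolic boundary of `Q_r`. -/
def pBdry (n : ℕ) (r : ℝ) : Set (En n × ℝ) :=
  ((closedBall (0 : En n) r) ×ˢ ({-(r ^ 2)} : Set ℝ)) ∪
    ((sphere (0 : En n) r) ×ˢ (Icc (-(r ^ 2)) 0))

/-- Parabolic boundary of the general cylinder `Ω × [0,T)`. -/
def pBdryGen (Ω : Set (En n)) (T : ℝ) : Set (En n × ℝ) :=
  ((closure Ω) ×ˢ ({0} : Set ℝ)) ∪ ((frontier Ω) ×ˢ (Ico 0 T))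



section Helpers
open Topology
open scoped RealInnerProductSpace Matrix

lemma deriv_nonneg_of_right_max {g : ℝ → ℝ} {a b : ℝ} (hab : a < b)
    (hg : DifferentiableAt ℝ g b) (hmax : ∀ τ ∈ Icc a b, g τ ≤ g b) : 0 ≤ deriv g b := by
  have hd := hg.hasDerivAt
  rw [hasDerivAt_iff_tendsto_slope] at hd
  have hd' : Tendsto (slope g b) (𝓝[<] b) (𝓝 (deriv g b)) :=
    hd.mono_left (nhdsWithin_mono _ (fun x hx => ne_of_lt hx))
  refine ge_of_tendsto hd' ?_
  filter_upwards [Ioo_mem_nhdsLT_of_mem ⟨hab, le_refl b⟩] with τ hτ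
  have h1 : g τ - g b ≤ 0 := sub_nonpos.2 (hmax τ ⟨le_of_lt hτ.1, le_of_lt hτ.2⟩)
  have h2 : τ - b < 0 := sub_neg.2 hτ.2
  rw [slope_def_field]
  exact div_nonneg_iff.2 (Or.inr ⟨h1, le_of_lt h2⟩)

lemma second_deriv_nonpos_of_localmax {ψ : ℝ → ℝ} (hmax : IsLocalMax ψ 0)
    (hdiff : ∀ᶠ r in 𝓝 (0:ℝ), DifferentiableAt ℝ ψ r)
    (hd2 : DifferentiableAt ℝ (deriv ψ) 0) : deriv (deriv ψ) 0 ≤ 0 := by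
  by_contra h
  push_neg at h
  have h0 : deriv ψ 0 = 0 := hmax.deriv_eq_zero
  have hd := hd2.hasDerivAt
  rw [hasDerivAt_iff_tendsto_slope] at hd
  -- eventually on the right, deriv ψ r > 0
  have hpos : ∀ᶠ r in 𝓝[>] (0:ℝ), 0 < deriv ψ r := by
    have h1 : Tendsto (slope (deriv ψ) 0) (𝓝[>] 0) (𝓝 (deriv (deriv ψ) 0)) :=
      hd.mono_left (nhdsWithin_mono _ (fun x hx => ne_of_gt hx))
    have h2 : ∀ᶠ r in 𝓝[>] (0:ℝ), 0 < slope (deriv ψ) 0 r :=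
      h1.eventually (eventually_gt_nhds h)
    filter_upwards [h2, self_mem_nhdsWithin] with r hr hr'
    rw [slope_def_field, h0, sub_zero, sub_zero] at hr
    have := mul_pos hr (show (0:ℝ) < r from hr')
    rwa [div_mul_cancel₀ _ (ne_of_gt hr')] at this
  obtain ⟨e1, he1, H1⟩ := (nhdsGT_basis (0:ℝ)).eventually_iff.1 hpos
  obtain ⟨e2, he2, H2⟩ := Metric.eventually_nhds_iff.1 hdiff
  obtain ⟨e3, he3, H3⟩ := Metric.eventually_nhds_iff.1 hmax
  set ε := min e1 (min e2 e3) with hε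
  have hεpos : 0 < ε := lt_min he1 (lt_min he2 he3)
  have hε1 : ε ≤ e1 := min_le_left _ _
  have hε2 : ε ≤ e2 := le_trans (min_le_right _ _) (min_le_left _ _)
  have hε3 : ε ≤ e3 := le_trans (min_le_right _ _) (min_le_right _ _)
  have hmono : StrictMonoOn ψ (Icc 0 (ε/2)) := by
    apply strictMonoOn_of_deriv_pos (convex_Icc _ _)
    · intro x hx
      refine (H2 ?_).continuousAt.continuousWithinAt
      rw [Real.dist_eq, sub_zero]
      have : |x| = x := abs_of_nonneg hx.1
      linarith [hx.2]
    · intro x hx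
      rw [interior_Icc] at hx
      exact H1 ⟨hx.1, by linarith [hx.2]⟩
  have hlt : ψ 0 < ψ (ε/2) :=
    hmono (by constructor <;> [rfl; positivity]) ⟨by positivity, le_refl _⟩ (by positivity)
  have : ψ (ε/2) ≤ ψ 0 := by
    apply H3
    rw [Real.dist_eq, sub_zero, abs_of_nonneg (by positivity : (0:ℝ) ≤ ε/2)]
    linarith
  linarith


lemma sum_mul_nonneg_of_posSemidef {n : ℕ} {P M : Matrix (Fin n) (Fin n) ℝ}
    (hP : P.PosSemidef) (hM : M.PosSemidef) : 0 ≤ ∑ i, ∑ j, P i j * M i j := by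
  classical
  open scoped MatrixOrder in
  obtain ⟨B, rfl⟩ := CStarAlgebra.nonneg_iff_eq_star_mul_self.mp hP.nonneg
  have key : ∀ k, 0 ≤ ∑ i, ∑ j, B k i * B k j * M i j := by
    intro k
    have h := hM.dotProduct_mulVec_nonneg (fun j => B k j)
    have heq : dotProduct (star fun j => B k j) (M.mulVec fun j => B k j)
        = ∑ i, ∑ j, B k i * B k j * M i j := by
      simp only [dotProduct, Matrix.mulVec, Pi.star_apply, star_trivial]
      refine Finset.sum_congr rfl fun i _ => ?_
      rw [Finset.mul_sum]
      refine Finset.sum_congr rfl fun j _ => ?_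
      ring
    rw [heq] at h
    exact h
  calc (0:ℝ) ≤ ∑ k, ∑ i, ∑ j, B k i * B k j * M i j :=
        Finset.sum_nonneg fun k _ => key k
    _ = ∑ i, ∑ k, ∑ j, B k i * B k j * M i j := Finset.sum_comm
    _ = ∑ i, ∑ j, ∑ k, B k i * B k j * M i j :=
        Finset.sum_congr rfl fun i _ => Finset.sum_comm
    _ = ∑ i, ∑ j, (Bᴴ * B) i j * M i j := by
        refine Finset.sum_congr rfl fun i _ => Finset.sum_congr rfl fun j _ => ?_
        rw [Matrix.mul_apply, Finset.sum_mul]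
        refine Finset.sum_congr rfl fun k _ => ?_
        simp [Matrix.conjTranspose_apply]

lemma quad_swap {n : ℕ} (c : Fin n → Fin n → ℝ) (x : Fin n → ℝ) :
    ∑ i, ∑ j, c j i * x i * x j = ∑ i, ∑ j, c i j * x i * x j := by
  rw [Finset.sum_comm]
  exact Finset.sum_congr rfl fun i _ => Finset.sum_congr rfl fun j _ => by ring

lemma trace_prod_bound {n : ℕ} {A Lam lam : ℝ} (hA : 0 ≤ A) (hlam : 0 ≤ lam)
    (a B : Matrix (Fin n) (Fin n) ℝ)
    (ha_low : ∀ ξ : Fin n → ℝ, lam * (∑ i, ξ i ^ 2) ≤ ∑ i, ∑ j, a i j * ξ i * ξ j)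
    (ha_up : ∀ ξ : Fin n → ℝ, ∑ i, ∑ j, a i j * ξ i * ξ j ≤ Lam * (∑ i, ξ i ^ 2))
    (hBsym : ∀ i j, B i j = B j i)
    (hB : ∀ ξ : Fin n → ℝ, ∑ i, ∑ j, B i j * ξ i * ξ j ≤ 4*A*(∑ i, ξ i ^ 2)) :
    ∑ i, ∑ j, a i j * B i j ≤ 4*A*n*Lam := by
  set P : Matrix (Fin n) (Fin n) ℝ := Matrix.of fun i j => (a i j + a j i)/2 with hPdef
  set M : Matrix (Fin n) (Fin n) ℝ :=
    Matrix.of fun i j => (if i = j then 4*A else 0) - B i j with hMdef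
  have quadform : ∀ (c : Matrix (Fin n) (Fin n) ℝ) (x : Fin n → ℝ),
      dotProduct (star x) (c.mulVec x) = ∑ i, ∑ j, c i j * x i * x j := by
    intro c x
    simp only [dotProduct, Matrix.mulVec, Pi.star_apply, star_trivial]
    refine Finset.sum_congr rfl fun i _ => ?_
    rw [Finset.mul_sum]
    refine Finset.sum_congr rfl fun j _ => ?_
    ring
  have hdiag : ∀ x : Fin n → ℝ,
      ∑ i, ∑ j, (if i = j then (4*A : ℝ) else 0) * x i * x j = 4*A*∑ i, x i ^ 2 := by
    intro x
    rw [Finset.mul_sum]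
    refine Finset.sum_congr rfl fun i _ => ?_
    rw [Finset.sum_eq_single i]
    · rw [if_pos rfl]; ring
    · intro b _ hb; simp [Ne.symm hb]
    · intro h; exact absurd (Finset.mem_univ i) h
  have hP : P.PosSemidef := by
    refine Matrix.PosSemidef.of_dotProduct_mulVec_nonneg ?_ ?_
    · ext i j
      simp only [hPdef, Matrix.conjTranspose_apply, Matrix.of_apply, star_trivial]
      ring
    · intro x
      rw [quadform]
      have e1 : ∑ i, ∑ j, P i j * x i * x j
          = ((∑ i, ∑ j, a i j * x i * x j) + ∑ i, ∑ j, a j i * x i * x j)/2 := by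
        rw [add_div, Finset.sum_div, Finset.sum_div, ← Finset.sum_add_distrib]
        refine Finset.sum_congr rfl fun i _ => ?_
        rw [Finset.sum_div, Finset.sum_div, ← Finset.sum_add_distrib]
        refine Finset.sum_congr rfl fun j _ => ?_
        simp only [hPdef, Matrix.of_apply]; ring
      rw [e1, quad_swap a x, add_self_div_two]
      exact le_trans (mul_nonneg hlam (Finset.sum_nonneg fun i _ => sq_nonneg _)) (ha_low x)
  have hM : M.PosSemidef := by
    refine Matrix.PosSemidef.of_dotProduct_mulVec_nonneg ?_ ?_
    · ext i j
      simp only [hMdef, Matrix.conjTranspose_apply, Matrix.of_apply, star_trivial, hBsym i j]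
      by_cases h : i = j
      · subst h; rfl
      · rw [if_neg h, if_neg (Ne.symm h)]
    · intro x
      rw [quadform]
      have e2 : ∑ i, ∑ j, M i j * x i * x j
          = (∑ i, ∑ j, (if i = j then (4*A:ℝ) else 0) * x i * x j)
            - ∑ i, ∑ j, B i j * x i * x j := by
        rw [← Finset.sum_sub_distrib]
        refine Finset.sum_congr rfl fun i _ => ?_
        rw [← Finset.sum_sub_distrib]
        refine Finset.sum_congr rfl fun j _ => ?_
        simp only [hMdef, Matrix.of_apply]; ring
      rw [e2, hdiag]
      have := hB x
      linarith
  have hMsym : ∀ i j, M i j = M j i := by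
    intro i j
    simp only [hMdef, Matrix.of_apply, hBsym i j]
    by_cases h : i = j
    · subst h; rfl
    · rw [if_neg h, if_neg (Ne.symm h)]
  have hswap : ∑ i, ∑ j, a j i * M i j = ∑ i, ∑ j, a i j * M i j := by
    rw [Finset.sum_comm]
    exact Finset.sum_congr rfl fun i _ => Finset.sum_congr rfl fun j _ => by rw [hMsym j i]
  have haM : ∑ i, ∑ j, a i j * M i j = ∑ i, ∑ j, P i j * M i j := by
    have e3 : ∑ i, ∑ j, P i j * M i j
        = ((∑ i, ∑ j, a i j * M i j) + ∑ i, ∑ j, a j i * M i j)/2 := by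
      rw [add_div, Finset.sum_div, Finset.sum_div, ← Finset.sum_add_distrib]
      refine Finset.sum_congr rfl fun i _ => ?_
      rw [Finset.sum_div, Finset.sum_div, ← Finset.sum_add_distrib]
      refine Finset.sum_congr rfl fun j _ => ?_
      simp only [hPdef, Matrix.of_apply]; ring
    rw [e3, hswap, add_self_div_two]
  have hnonneg : 0 ≤ ∑ i, ∑ j, a i j * M i j := by
    rw [haM]; exact sum_mul_nonneg_of_posSemidef hP hM
  have hdiag_a : ∀ i, a i i ≤ Lam := by
    intro i
    set ξ : Fin n → ℝ := fun k => if k = i then 1 else 0 with hξ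
    have h1 : ∑ k, ∑ l, a k l * ξ k * ξ l = a i i := by
      rw [Finset.sum_eq_single i]
      · rw [Finset.sum_eq_single i]
        · simp [hξ]
        · intro b _ hb; simp [hξ, hb]
        · intro h; exact absurd (Finset.mem_univ i) h
      · intro b _ hb
        apply Finset.sum_eq_zero
        intro l _
        simp [hξ, hb]
      · intro h; exact absurd (Finset.mem_univ i) h
    have h2 : ∑ k, ξ k ^ 2 = 1 := by
      rw [Finset.sum_eq_single i]
      · simp [hξ]
      · intro b _ hb; simp [hξ, hb]
      · intro h; exact absurd (Finset.mem_univ i) h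
    have := ha_up ξ
    rw [h1, h2, mul_one] at this
    exact this
  have htr : ∑ i, (a i i : ℝ) ≤ n * Lam := by
    calc ∑ i, (a i i : ℝ) ≤ ∑ _i : Fin n, Lam := Finset.sum_le_sum fun i _ => hdiag_a i
      _ = n * Lam := by rw [Finset.sum_const, Finset.card_univ, Fintype.card_fin, nsmul_eq_mul]
  have hsplit : ∑ i, ∑ j, a i j * B i j
      = (∑ i, ∑ j, a i j * (if i = j then (4*A:ℝ) else 0)) - ∑ i, ∑ j, a i j * M i j := by
    rw [← Finset.sum_sub_distrib]
    refine Finset.sum_congr rfl fun i _ => ?_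
    rw [← Finset.sum_sub_distrib]
    refine Finset.sum_congr rfl fun j _ => ?_
    simp only [hMdef, Matrix.of_apply]; ring
  have hdd : ∑ i, ∑ j, a i j * (if i = j then (4*A:ℝ) else 0) = (∑ i, (a i i:ℝ)) * (4*A) := by
    rw [Finset.sum_mul]
    refine Finset.sum_congr rfl fun i _ => ?_
    rw [Finset.sum_eq_single i]
    · rw [if_pos rfl]
    · intro b _ hb; simp [Ne.symm hb]
    · intro h; exact absurd (Finset.mem_univ i) h
  rw [hsplit, hdd]
  have h4A : (0:ℝ) ≤ 4*A := by linarith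
  have : (∑ i, (a i i:ℝ)) * (4*A) ≤ (n*Lam) * (4*A) := mul_le_mul_of_nonneg_right htr h4A
  nlinarith [hnonneg]



lemma grad_inner (f : En n → ℝ) (y v : En n) :
    ⟪gradient f y, v⟫ = fderiv ℝ f y v := by
  rw [gradient]
  exact InnerProductSpace.toDual_symm_apply

lemma hess_symm {f : En n → ℝ} {x : En n}
    (hdf : ∀ᶠ y in 𝓝 x, DifferentiableAt ℝ f y)
    (hdg : DifferentiableAt ℝ (fun y => gradient f y) x) :
    ∀ v w, ⟪fderiv ℝ (fun y => gradient f y) x v, w⟫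
      = ⟪fderiv ℝ (fun y => gradient f y) x w, v⟫ := by
  set Γ : En n → En n := fun y => gradient f y with hΓ
  set H := fderiv ℝ Γ x with hH
  let L : En n →L[ℝ] (En n →L[ℝ] ℝ) := by
    exact (InnerProductSpace.toDual ℝ (En n)).toContinuousLinearEquiv.toContinuousLinearMap
  set f' : En n → (En n →L[ℝ] ℝ) := fun y => L (Γ y) with hf'
  have hf : ∀ᶠ y in 𝓝 x, HasFDerivAt f (f' y) y := by
    filter_upwards [hdf] with y hy
    have h1 : f' y = fderiv ℝ f y := by
      show L (gradient f y) = fderiv ℝ f y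
      have h0 : L (gradient f y) = InnerProductSpace.toDual ℝ (En n) (gradient f y) := rfl
      rw [h0, gradient, LinearIsometryEquiv.apply_symm_apply]
    rw [h1]
    exact hy.hasFDerivAt
  have hx : HasFDerivAt f' (L.comp H) x := L.hasFDerivAt.comp x hdg.hasFDerivAt
  intro v w
  have hsym := second_derivative_symmetric_of_eventually hf hx v w
  have happ : ∀ a b : En n, (L.comp H) a b = ⟪H a, b⟫ := by
    intro a b
    have h2 : (L.comp H) a b = L (H a) b := rfl
    have h3 : L (H a) b = InnerProductSpace.toDual ℝ (En n) (H a) b := rfl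
    rw [h2, h3, InnerProductSpace.toDual_apply_apply]
  rw [happ, happ] at hsym
  exact hsym

lemma hess_quad {f : En n → ℝ} {x : En n} {R A : ℝ} (hx : x ∈ ball (0:En n) R)
    (hdf : ∀ y ∈ ball (0:En n) R, DifferentiableAt ℝ f y)
    (hdg : DifferentiableAt ℝ (fun y => gradient f y) x)
    (hmax : ∀ y ∈ ball (0:En n) R, f y - 2*A*‖y‖^2 ≤ f x - 2*A*‖x‖^2)
    (ξ : En n) : ⟪fderiv ℝ (fun y => gradient f y) x ξ, ξ⟫ ≤ 4*A*‖ξ‖^2 := by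
  set Γ : En n → En n := fun y => gradient f y with hΓ
  set H := fderiv ℝ Γ x with hH
  set c : ℝ → En n := fun r => x + r • ξ with hc
  have hc0 : c 0 = x := by simp [hc]
  have hcd : ∀ r : ℝ, HasDerivAt c ξ r := by
    intro r
    have := ((hasDerivAt_id r).smul_const ξ).const_add x
    simpa [hc] using this
  have hxR : ‖x‖ < R := mem_ball_zero_iff.1 hx
  set ρ := (R - ‖x‖)/(‖ξ‖+1) with hρ
  have hρpos : 0 < ρ := div_pos (by linarith) (by positivity)
  have hcball : ∀ r : ℝ, |r| < ρ → c r ∈ ball (0:En n) R := by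
    intro r hr
    rw [mem_ball_zero_iff]
    have h1 : ‖c r‖ ≤ ‖x‖ + |r| * ‖ξ‖ := by
      simp only [hc]
      calc ‖x + r•ξ‖ ≤ ‖x‖ + ‖r•ξ‖ := norm_add_le _ _
        _ = ‖x‖ + |r| * ‖ξ‖ := by rw [norm_smul, Real.norm_eq_abs]
    have h2 : |r| * (‖ξ‖+1) < ρ*(‖ξ‖+1) := mul_lt_mul_of_pos_right hr (by positivity)
    have h3 : ρ*(‖ξ‖+1) = R - ‖x‖ := div_mul_cancel₀ _ (by positivity)
    have h4 := abs_nonneg r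
    nlinarith
  have hnorm : ∀ r : ℝ, ‖c r‖^2 = ‖x‖^2 + 2*r*⟪x,ξ⟫ + r^2*‖ξ‖^2 := by
    intro r
    rw [← real_inner_self_eq_norm_sq, hc]
    rw [real_inner_add_add_self, real_inner_smul_right, real_inner_smul_left,
      real_inner_smul_right, real_inner_self_eq_norm_sq, real_inner_self_eq_norm_sq]
    ring
  set ψ : ℝ → ℝ := fun r => f (c r) - 2*A*(‖x‖^2 + 2*r*⟪x,ξ⟫ + r^2*‖ξ‖^2) with hψ
  have hlocmax : IsLocalMax ψ 0 := by
    filter_upwards [Metric.ball_mem_nhds (0:ℝ) hρpos] with r hr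
    rw [mem_ball, Real.dist_eq, sub_zero] at hr
    have h1 := hmax (c r) (hcball r hr)
    simp only [hψ]
    rw [← hnorm r]
    have h0 : ‖x‖^2 + 2*0*⟪x,ξ⟫ + 0^2*‖ξ‖^2 = ‖x‖^2 := by ring
    rw [h0, hc0]
    exact h1
  set D : ℝ → ℝ := fun r => ⟪Γ (c r), ξ⟫ - 2*A*(2*⟪x,ξ⟫ + 2*r*‖ξ‖^2) with hD
  have hψd : ∀ r : ℝ, |r| < ρ → HasDerivAt ψ (D r) r := by
    intro r hr
    have h1 : HasDerivAt (fun s => f (c s)) (⟪Γ (c r), ξ⟫) r := by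
      have hg : ⟪Γ (c r), ξ⟫ = fderiv ℝ f (c r) ξ := grad_inner f (c r) ξ
      rw [hg]
      exact ((hdf (c r) (hcball r hr)).hasFDerivAt).comp_hasDerivAt r (hcd r)
    have f1 : HasDerivAt (fun s:ℝ => 2*s*⟪x,ξ⟫) (2*⟪x,ξ⟫) r := by
      simpa using ((hasDerivAt_id r).const_mul 2).mul_const ⟪x,ξ⟫
    have f2 : HasDerivAt (fun s:ℝ => s^2*‖ξ‖^2) (2*r*‖ξ‖^2) r := by
      have := (hasDerivAt_pow 2 r).mul_const (‖ξ‖^2)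
      simpa [pow_one] using this
    have hq : HasDerivAt (fun s:ℝ => ‖x‖^2 + 2*s*⟪x,ξ⟫ + s^2*‖ξ‖^2)
        (2*⟪x,ξ⟫ + 2*r*‖ξ‖^2) r := by
      exact (((hasDerivAt_const r (‖x‖^2)).add f1).add f2).congr_deriv (by ring)
    exact h1.sub (hq.const_mul (2*A))
  have hΓd : HasDerivAt (fun r => Γ (c r)) (H ξ) 0 := by
    have h1 : HasFDerivAt Γ H (c 0) := by rw [hc0]; exact hdg.hasFDerivAt
    exact h1.comp_hasDerivAt 0 (hcd 0)
  have hg1 : HasDerivAt (fun r => ⟪Γ (c r), ξ⟫) (⟪H ξ, ξ⟫) 0 := by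
    have h2 : HasDerivAt (fun r => ⟪ξ, Γ (c r)⟫) (⟪ξ, H ξ⟫) 0 := by
      have h3 := ((innerSL ℝ ξ).hasFDerivAt).comp_hasDerivAt 0 hΓd
      simp at h3; exact h3
    have h4 : (fun r => ⟪ξ, Γ (c r)⟫) = (fun r => ⟪Γ (c r), ξ⟫) := by
      funext r; exact real_inner_comm _ _
    rw [h4] at h2
    have h5 : ⟪H ξ, ξ⟫ = ⟪ξ, H ξ⟫ := real_inner_comm _ _
    rw [h5]
    exact h2
  have hDd : HasDerivAt D (⟪H ξ, ξ⟫ - 2*A*(2*‖ξ‖^2)) 0 := by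
    have f3 : HasDerivAt (fun r:ℝ => 2*A*(2*⟪x,ξ⟫ + 2*r*‖ξ‖^2)) (2*A*(2*‖ξ‖^2)) 0 := by
      have f4 : HasDerivAt (fun r:ℝ => 2*r*‖ξ‖^2) (2*‖ξ‖^2) 0 := by
        simpa using ((hasDerivAt_id (0:ℝ)).const_mul 2).mul_const (‖ξ‖^2)
      have f5 : HasDerivAt (fun r:ℝ => 2*⟪x,ξ⟫ + 2*r*‖ξ‖^2) (2*‖ξ‖^2) 0 := by
        exact ((hasDerivAt_const (0:ℝ) (2*⟪x,ξ⟫)).add f4).congr_deriv (by ring)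
      exact f5.const_mul (2*A)
    exact hg1.sub f3
  have heq : deriv ψ =ᶠ[𝓝 0] D := by
    filter_upwards [Metric.ball_mem_nhds (0:ℝ) hρpos] with r hr
    rw [mem_ball, Real.dist_eq, sub_zero] at hr
    exact (hψd r hr).deriv
  have hdiffψ : ∀ᶠ r in 𝓝 (0:ℝ), DifferentiableAt ℝ ψ r := by
    filter_upwards [Metric.ball_mem_nhds (0:ℝ) hρpos] with r hr
    rw [mem_ball, Real.dist_eq, sub_zero] at hr
    exact (hψd r hr).differentiableAt
  have hd2 : DifferentiableAt ℝ (deriv ψ) 0 := by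
    rw [Filter.EventuallyEq.differentiableAt_iff heq]
    exact hDd.differentiableAt
  have hkey := second_deriv_nonpos_of_localmax hlocmax hdiffψ hd2
  rw [Filter.EventuallyEq.deriv_eq heq, hDd.deriv] at hkey
  linarith

-- bilinear expansion
lemma hess_quad_coords (H : En n →L[ℝ] En n) {A : ℝ}
    (hq : ∀ v : En n, ⟪H v, v⟫ ≤ 4*A*‖v‖^2) (ξ : Fin n → ℝ) :
    ∑ i, ∑ j, ⟪H (EuclideanSpace.single i 1), EuclideanSpace.single j 1⟫ * ξ i * ξ j
      ≤ 4*A*(∑ i, ξ i ^ 2) := by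
  set v : En n := (WithLp.equiv 2 (Fin n → ℝ)).symm ξ with hv
  have hvi : ∀ i, v i = ξ i := fun i => rfl
  have hdecomp : v = ∑ i, ξ i • EuclideanSpace.single i (1:ℝ) := by
    ext j
    rw [WithLp.ofLp_sum, Finset.sum_apply]
    simp only [PiLp.smul_apply, EuclideanSpace.single_apply, smul_eq_mul, mul_ite, mul_one, mul_zero]
    rw [Finset.sum_ite_eq Finset.univ j ξ]
    simp [hvi]
  have hnorm : ‖v‖^2 = ∑ i, ξ i ^ 2 := by
    rw [← real_inner_self_eq_norm_sq, PiLp.inner_apply]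
    simp [hvi, sq]
  have hexp : ⟪H v, v⟫
      = ∑ i, ∑ j, ⟪H (EuclideanSpace.single i 1), EuclideanSpace.single j 1⟫ * ξ i * ξ j := by
    calc ⟪H v, v⟫ = ∑ i, ξ i * ⟪H (EuclideanSpace.single i 1), v⟫ := by
          rw [hdecomp, map_sum, sum_inner]
          refine Finset.sum_congr rfl fun i _ => ?_
          rw [_root_.map_smul, real_inner_smul_left]
      _ = ∑ i, ∑ j, ⟪H (EuclideanSpace.single i 1), EuclideanSpace.single j 1⟫ * ξ i * ξ j := by
          refine Finset.sum_congr rfl fun i _ => ?_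
          rw [hdecomp, inner_sum, Finset.mul_sum]
          refine Finset.sum_congr rfl fun j _ => ?_
          rw [real_inner_smul_right]
          ring
  have := hq v
  rw [hexp, hnorm] at this
  exact this

-- ===== new helpers =====
lemma Qc_eq : Qc n 1 = (ball (0:En n) 1) ×ˢ (Ioc (-1:ℝ) 0) := by
  rw [Qc]; norm_num

lemma closure_Qc_eq : closure (Qc n 1) = (closedBall (0:En n) 1) ×ˢ (Icc (-1:ℝ) 0) := by
  rw [Qc_eq, closure_prod_eq, closure_ball _ one_ne_zero, closure_Ioc (by norm_num : (-1:ℝ) ≠ 0)]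

lemma gradient_neg' (g : En n → ℝ) (y : En n) :
    gradient (fun w => -g w) y = -gradient g y := by
  rw [gradient, gradient, fderiv_fun_neg, map_neg]

lemma solves_neg {a : En n × ℝ → Matrix (Fin n) (Fin n) ℝ} {u : En n × ℝ → ℝ}
    {Q : Set (En n × ℝ)} (h : SolvesLinear a u Q) :
    SolvesLinear a (fun z => -u z) Q := by
  intro z hz
  obtain ⟨h1, h2, h3, h4⟩ := h z hz
  have hgradeq : (fun y => gradient (fun w => -u (w, z.2)) y)
      = fun y => -gradient (fun w => u (w, z.2)) y := by
    funext y; exact gradient_neg' (fun w => u (w, z.2)) y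
  have hHess : sHess (fun z => -u z) z = -sHess u z := by
    rw [sHess, sHess, hgradeq]
    exact fderiv_neg
  have hpd2 : ∀ i j, pd2 (fun z => -u z) z i j = -pd2 u z i j := by
    intro i j
    rw [pd2, pd2, hHess]
    rw [ContinuousLinearMap.neg_apply, inner_neg_left]
  have htD : tDeriv (fun z => -u z) z = -tDeriv u z := by
    rw [tDeriv, tDeriv]
    exact deriv.neg
  refine ⟨h1.neg, h2.neg, ?_, ?_⟩
  · rw [hgradeq]; exact h3.neg
  · rw [htD, h4, ← Finset.sum_neg_distrib]
    refine Finset.sum_congr rfl fun i _ => ?_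
    rw [← Finset.sum_neg_distrib]
    refine Finset.sum_congr rfl fun j _ => ?_
    rw [hpd2]; ring

lemma osc_ext {u : En n × ℝ → ℝ} {A : ℝ} (hcont : ContinuousOn u (closure (Qc n 1)))
    (hosc : ∀ t ∈ Icc (-1 : ℝ) 0, ∀ x ∈ ball (0 : En n) 1, ∀ y ∈ ball (0 : En n) 1,
      |u (x, t) - u (y, t)| ≤ A) :
    ∀ t ∈ Icc (-1 : ℝ) 0, ∀ x ∈ closedBall (0 : En n) 1,
      |u (x, t) - u ((0:En n), t)| ≤ A := by
  intro t ht x hx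
  have h0b : (0:En n) ∈ ball (0:En n) 1 := mem_ball_self one_pos
  set seq : ℕ → En n := fun k => (1 - (1:ℝ)/(k+2)) • x with hseq
  have hfrac : ∀ k : ℕ, 0 < (1:ℝ)/(k+2) ∧ (1:ℝ)/(k+2) ≤ 1/2 := by
    intro k
    have hk : (0:ℝ) ≤ (k:ℝ) := Nat.cast_nonneg k
    constructor
    · positivity
    · apply one_div_le_one_div_of_le
      · norm_num
      · linarith
  have hball : ∀ k, seq k ∈ ball (0:En n) 1 := by
    intro k
    rw [hseq, mem_ball_zero_iff, norm_smul, Real.norm_eq_abs]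
    obtain ⟨hp, hle⟩ := hfrac k
    have h1 : |1 - 1/((k:ℝ)+2)| = 1 - 1/((k:ℝ)+2) := abs_of_nonneg (by linarith)
    rw [h1]
    have hxn : ‖x‖ ≤ 1 := mem_closedBall_zero_iff.1 hx
    nlinarith [norm_nonneg x]
  have htendc : Tendsto (fun k : ℕ => 1 - (1:ℝ)/(k+2)) atTop (𝓝 1) := by
    have h2 := (tendsto_one_div_add_atTop_nhds_zero_nat (𝕜 := ℝ)).comp (tendsto_add_atTop_nat 1)
    have h3 : ((fun n : ℕ => 1/((n:ℝ)+1)) ∘ (fun k => k + 1)) = fun k : ℕ => (1:ℝ)/(k+2) := by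
      funext k
      simp only [Function.comp_apply]
      push_cast
      ring_nf
    rw [h3] at h2
    simpa using tendsto_const_nhds.sub h2
  have htends : Tendsto seq atTop (𝓝 x) := by
    have h := htendc.smul_const x
    rw [one_smul] at h
    exact h
  have hmem : (x, t) ∈ closure (Qc n 1) := by
    rw [closure_Qc_eq]; exact ⟨hx, ht⟩
  have hseqmem : ∀ k, (seq k, t) ∈ closure (Qc n 1) := by
    intro k; rw [closure_Qc_eq]; exact ⟨ball_subset_closedBall (hball k), ht⟩
  have htendsu : Tendsto (fun k => u (seq k, t)) atTop (𝓝 (u (x,t))) := by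
    have hcw : ContinuousWithinAt u (closure (Qc n 1)) (x,t) := hcont (x,t) hmem
    have hpt : Tendsto (fun k => (seq k, t)) atTop (𝓝 (x,t)) :=
      htends.prodMk_nhds tendsto_const_nhds
    exact hcw.tendsto.comp (tendsto_nhdsWithin_of_tendsto_nhds_of_eventually_within _ hpt
      (Eventually.of_forall hseqmem))
  have habs : Tendsto (fun k => |u (seq k, t) - u ((0:En n), t)|) atTop
      (𝓝 |u (x,t) - u ((0:En n),t)|) := (htendsu.sub tendsto_const_nhds).abs
  exact le_of_tendsto habs (Eventually.of_forall fun k => hosc t ht (seq k) (hball k) 0 h0b)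

-- ===== core barrier lemma =====
lemma core_barrier {Lam lam : ℝ} {a : En n × ℝ → Matrix (Fin n) (Fin n) ℝ}
    {u : En n × ℝ → ℝ} {A : ℝ}
    (hlam0 : 0 ≤ lam)
    (hparab : UnifParab a lam Lam (Qc n 1))
    (hsol : SolvesLinear a u (Qc n 1))
    (hA : 0 < A)
    (hosc' : ∀ t ∈ Icc (-1:ℝ) 0, ∀ x ∈ closedBall (0:En n) 1,
      |u (x, t) - u ((0:En n), t)| ≤ A)
    {s t : ℝ} (hs : -1 < s) (hst : s ≤ t) (ht : t ≤ 0)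
    {x : En n} (hx : x ∈ closedBall (0:En n) 1)
    (hcontD : ContinuousOn u ((closedBall (0:En n) 1) ×ˢ (Icc s t))) :
    u (x, t) ≤ u ((0:En n), s) + A + 2*A*‖x‖^2 + (4*n*Lam+1)*A*(t-s) := by
  by_contra hcon
  push_neg at hcon
  set K : ℝ := 4*(n:ℝ)*Lam+1 with hK
  set u0 : ℝ := u ((0:En n), s) with hu0
  set G : En n × ℝ → ℝ := fun z => u z - (u0 + A + 2*A*‖z.1‖^2 + K*A*(z.2 - s)) with hGdef
  set D : Set (En n × ℝ) := (closedBall (0:En n) 1) ×ˢ (Icc s t) with hDdef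
  have hDcomp : IsCompact D := (isCompact_closedBall _ _).prod isCompact_Icc
  have hDne : D.Nonempty := ⟨(x,t), hx, hst, le_refl t⟩
  have hGcont : ContinuousOn G D := by
    apply hcontD.sub
    apply Continuous.continuousOn
    have h1 : Continuous fun z : En n × ℝ => ‖z.1‖ := continuous_fst.norm
    fun_prop
  obtain ⟨zs, hzsD, hzmax⟩ := hDcomp.exists_isMaxOn hDne hGcont
  obtain ⟨xs, ts⟩ := zs
  rw [isMaxOn_iff] at hzmax
  have hxs : xs ∈ closedBall (0:En n) 1 := hzsD.1
  have hts : ts ∈ Icc s t := hzsD.2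
  have hGxt : 0 < G (x,t) := by
    simp only [hGdef]
    linarith [hcon]
  have hGzs : 0 < G (xs,ts) := lt_of_lt_of_le hGxt (hzmax (x,t) ⟨hx, hst, le_refl t⟩)
  have hsIcc : s ∈ Icc (-1:ℝ) 0 := ⟨le_of_lt hs, le_trans hst ht⟩
  have htsIcc : ts ∈ Icc (-1:ℝ) 0 := ⟨le_trans (le_of_lt hs) hts.1, le_trans hts.2 ht⟩
  -- ts > s
  have hts_gt : s < ts := by
    rcases lt_or_eq_of_le hts.1 with h | h
    · exact h
    have h1 : |u (xs, s) - u ((0:En n), s)| ≤ A := hosc' s hsIcc xs hxs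
    have h2 : u (xs, s) - u0 ≤ A := le_trans (le_abs_self _) h1
    have h3 : G (xs, ts) = u (xs,s) - (u0 + A + 2*A*‖xs‖^2 + 0) := by
      simp only [hGdef, ← h]
      ring
    rw [h3] at hGzs
    nlinarith [norm_nonneg xs, sq_nonneg ‖xs‖]
  -- xs is interior
  have hxs_lt : ‖xs‖ < 1 := by
    rcases lt_or_eq_of_le (mem_closedBall_zero_iff.1 hxs) with h | h
    · exact h
    exfalso
    have h1 : |u (xs, ts) - u ((0:En n), ts)| ≤ A := hosc' ts htsIcc xs hxs
    have h2 : u (xs, ts) - u ((0:En n), ts) ≤ A := le_trans (le_abs_self _) h1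
    have h3 : G ((0:En n), ts) ≤ G (xs, ts) :=
      hzmax ((0:En n), ts) ⟨mem_closedBall_self one_pos.le, hts⟩
    simp only [hGdef, norm_zero] at h3 hGzs
    rw [h] at h3 hGzs
    nlinarith
  have hzQ : (xs, ts) ∈ Qc n 1 := by
    rw [Qc_eq]
    exact ⟨mem_ball_zero_iff.2 hxs_lt, lt_trans hs hts_gt, le_trans hts.2 ht⟩
  obtain ⟨hdt, hdx, hdg, heqn⟩ := hsol (xs, ts) hzQ
  -- time derivative lower bound
  have htime : K*A ≤ tDeriv u (xs, ts) := by
    set g : ℝ → ℝ := fun τ => u (xs, τ) - K*A*(τ - s) with hg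
    have hgd : HasDerivAt g (tDeriv u (xs,ts) - K*A) ts := by
      have ha : HasDerivAt (fun τ : ℝ => K*A*(τ - s)) (K*A) ts := by
        simpa using ((hasDerivAt_id ts).sub_const s).const_mul (K*A)
      have hb : HasDerivAt (fun τ => u (xs, τ)) (tDeriv u (xs,ts)) ts := by
        have := hdt.hasDerivAt
        simpa [tDeriv] using this
      exact hb.sub ha
    have hgmax : ∀ τ ∈ Icc s ts, g τ ≤ g ts := by
      intro τ hτ
      have h1 : G (xs, τ) ≤ G (xs, ts) :=
        hzmax (xs, τ) ⟨hxs, hτ.1, le_trans hτ.2 hts.2⟩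
      simp only [hGdef, hg] at h1 ⊢
      linarith
    have h0 := deriv_nonneg_of_right_max hts_gt hgd.differentiableAt hgmax
    rw [hgd.deriv] at h0
    linarith
  -- spatial Hessian bound
  set f : En n → ℝ := fun y => u (y, ts) with hf
  have hdf : ∀ y ∈ ball (0:En n) 1, DifferentiableAt ℝ f y := by
    intro y hy
    have hyQ : (y, ts) ∈ Qc n 1 := by
      rw [Qc_eq]
      exact ⟨hy, (Qc_eq ▸ hzQ).2⟩
    exact (hsol (y, ts) hyQ).2.1
  have hdgf : DifferentiableAt ℝ (fun y => gradient f y) xs := hdg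
  have hmaxf : ∀ y ∈ ball (0:En n) 1, f y - 2*A*‖y‖^2 ≤ f xs - 2*A*‖xs‖^2 := by
    intro y hy
    have h1 : G (y, ts) ≤ G (xs, ts) :=
      hzmax (y, ts) ⟨ball_subset_closedBall hy, hts⟩
    simp only [hGdef, hf] at h1 ⊢
    linarith
  have hquad := hess_quad (mem_ball_zero_iff.2 hxs_lt) hdf hdgf hmaxf
  have hsym := hess_symm
    (by filter_upwards [isOpen_ball.mem_nhds (mem_ball_zero_iff.2 hxs_lt)] with y hy
        exact hdf y hy)
    hdgf
  -- assemble matrix inequality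
  have hHess_eq : sHess u (xs, ts) = fderiv ℝ (fun y => gradient f y) xs := rfl
  have hquad' : ∀ v : En n, ⟪sHess u (xs,ts) v, v⟫ ≤ 4*A*‖v‖^2 := by
    intro v; rw [hHess_eq]; exact hquad v
  have hcoords := hess_quad_coords (sHess u (xs,ts)) hquad'
  set B : Matrix (Fin n) (Fin n) ℝ := Matrix.of fun i j => pd2 u (xs,ts) i j with hB
  have hBpd : ∀ i j, B i j = pd2 u (xs,ts) i j := fun i j => rfl
  have hpd_inner : ∀ i j, pd2 u (xs,ts) i j
      = ⟪sHess u (xs,ts) (EuclideanSpace.single i 1), EuclideanSpace.single j 1⟫ := by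
    intro i j; rfl
  have hBsym : ∀ i j, B i j = B j i := by
    intro i j
    rw [hBpd, hBpd, hpd_inner, hpd_inner, hHess_eq]
    exact hsym _ _
  have hBquad : ∀ ξ : Fin n → ℝ, ∑ i, ∑ j, B i j * ξ i * ξ j ≤ 4*A*(∑ i, ξ i ^ 2) := by
    intro ξ
    have := hcoords ξ
    calc ∑ i, ∑ j, B i j * ξ i * ξ j
        = ∑ i, ∑ j, ⟪sHess u (xs,ts) (EuclideanSpace.single i 1),
            EuclideanSpace.single j 1⟫ * ξ i * ξ j := by
          refine Finset.sum_congr rfl fun i _ => Finset.sum_congr rfl fun j _ => ?_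
          rw [hBpd, hpd_inner]
      _ ≤ 4*A*(∑ i, ξ i ^ 2) := this
  have htrace := trace_prod_bound (le_of_lt hA) hlam0 (a (xs,ts)) B
    (fun ξ => (hparab (xs,ts) hzQ ξ).1) (fun ξ => (hparab (xs,ts) hzQ ξ).2)
    hBsym hBquad
  have heqn' : tDeriv u (xs,ts) = ∑ i, ∑ j, a (xs,ts) i j * B i j := by
    rw [heqn]
    exact Finset.sum_congr rfl fun i _ => Finset.sum_congr rfl fun j _ => by rw [hBpd]
  rw [heqn'] at htime
  have hLamn : (0:ℝ) ≤ 4*A*n*Lam := by nlinarith [htime, le_trans htime htrace]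
  have : K*A ≤ 4*A*n*Lam := le_trans htime htrace
  rw [hK] at this
  nlinarith

end Helpers

/-- Lemma 2.1: if `u ∈ C(Q̄_1)` solves the linear uniformly parabolic
equation `u_t = a_{ij}(x,t) u_{ij}` in `Q_1` with `λI ≤ (a_{ij}) ≤ ΛI`, and the spatial
oscillation `osc_{B_1} u(·,t) ≤ A` for every `t ∈ [−1,0]`, then `osc_{Q_1} u ≤ C A`
with `C > 0` depending only on `n` and `Λ`. -/
theorem osc_bound_linear_parabolic (n : ℕ) (Lam : ℝ) (hLam : 0 < Lam) :
    ∃ C : ℝ, 0 < C ∧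
      ∀ (lam : ℝ) (a : En n × ℝ → Matrix (Fin n) (Fin n) ℝ) (u : En n × ℝ → ℝ) (A : ℝ),
        0 < lam → lam ≤ Lam →
        UnifParab a lam Lam (Qc n 1) →
        ContinuousOn u (closure (Qc n 1)) →
        SolvesLinear a u (Qc n 1) →
        0 < A →
        (∀ t ∈ Icc (-1 : ℝ) 0, ∀ x ∈ ball (0 : En n) 1, ∀ y ∈ ball (0 : En n) 1,
          |u (x, t) - u (y, t)| ≤ A) →
        ∀ z ∈ Qc n 1, ∀ w ∈ Qc n 1, |u z - u w| ≤ C * A := by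
  have hn : (0:ℝ) ≤ (n:ℝ) := Nat.cast_nonneg n
  refine ⟨4*(n:ℝ)*Lam + 4, by nlinarith, ?_⟩
  intro lam a u A hlam hlamLe hparab hcont hsol hA hosc
  have hosc' := osc_ext hcont hosc
  have main : ∀ p ∈ Qc n 1, ∀ q ∈ Qc n 1, q.2 ≤ p.2 →
      |u p - u q| ≤ (4*(n:ℝ)*Lam + 4) * A := by
    rintro ⟨px, pt⟩ hp ⟨qx, qt⟩ hq hle
    rw [Qc_eq] at hp hq
    obtain ⟨hpx, hpt⟩ := hp
    obtain ⟨hqx, hqt⟩ := hq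
    have hle' : qt ≤ pt := hle
    have hptIcc : pt ∈ Icc (-1:ℝ) 0 := ⟨le_trans hqt.1.le hle', hpt.2⟩
    have hqtIcc : qt ∈ Icc (-1:ℝ) 0 := ⟨hqt.1.le, hqt.2⟩
    have hpxb : px ∈ ball (0:En n) 1 := hpx
    have hqxb : qx ∈ ball (0:En n) 1 := hqx
    have c1 : |u (px, pt) - u ((0:En n), pt)| ≤ A :=
      hosc' pt hptIcc px (ball_subset_closedBall hpxb)
    have c4 : |u (qx, qt) - u ((0:En n), qt)| ≤ A :=
      hosc' qt hqtIcc qx (ball_subset_closedBall hqxb)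
    have hcontD : ContinuousOn u ((closedBall (0:En n) 1) ×ˢ (Icc qt pt)) := by
      apply hcont.mono
      rw [closure_Qc_eq]
      exact Set.prod_mono subset_rfl (Icc_subset_Icc hqtIcc.1 hptIcc.2)
    have h0cb : (0:En n) ∈ closedBall (0:En n) 1 := mem_closedBall_self one_pos.le
    have c2 := core_barrier (n := n) hlam.le hparab hsol hA hosc'
      hqt.1 hle' hpt.2 h0cb hcontD
    -- negated solution
    have hosc'' : ∀ t ∈ Icc (-1:ℝ) 0, ∀ x ∈ closedBall (0:En n) 1,
        |(fun z => -u z) (x, t) - (fun z => -u z) ((0:En n), t)| ≤ A := by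
      intro t ht x hx
      have h1 : (fun z : En n × ℝ => -u z) (x, t) - (fun z : En n × ℝ => -u z) ((0:En n), t)
          = -(u (x,t) - u ((0:En n), t)) := by simp; ring
      rw [h1, abs_neg]
      exact hosc' t ht x hx
    have c3 := core_barrier (n := n) (u := fun z => -u z) hlam.le hparab (solves_neg hsol) hA
      hosc'' hqt.1 hle' hpt.2 h0cb hcontD.neg
    rw [norm_zero] at c2 c3
    simp only at c2 c3
    have hKA : 0 ≤ (4*(n:ℝ)*Lam+1)*A := le_of_lt (mul_pos (by nlinarith) hA)
    have hts1 : pt - qt ≤ 1 := by linarith [hpt.2, hqt.1]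
    have hts0 : 0 ≤ pt - qt := by linarith
    have hmul : (4*(n:ℝ)*Lam+1)*A*(pt-qt) ≤ (4*(n:ℝ)*Lam+1)*A := by
      nlinarith [mul_le_mul_of_nonneg_left hts1 hKA]
    have c2' : u ((0:En n), pt) - u ((0:En n), qt) ≤ A + (4*(n:ℝ)*Lam+1)*A := by
      nlinarith [c2]
    have c3' : u ((0:En n), qt) - u ((0:En n), pt) ≤ A + (4*(n:ℝ)*Lam+1)*A := by
      nlinarith [c3]
    have e1 := abs_le.1 c1
    have e4 := abs_le.1 c4
    rw [abs_le]
    constructor <;> nlinarith [e1.1, e1.2, e4.1, e4.2, c2', c3']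
  intro z hz w hw
  rcases le_total w.2 z.2 with h | h
  · exact main z hz w hw h
  · rw [abs_sub_comm]
    exact main w hw z hz h
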